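/- Let $P_1,\ldots,P_m$ be symmetric positive semidefinite $n\times n$ matrices, $\varphi$ in the probability simplex of $\mathbb{R}^m$, $P(\varphi)=\sum_i \varphi_i P_i$, and $\theta>0$. Then for all $x\in\mathbb{R}^n$, $\frac{4\,x'P(\varphi)P(\varphi)x}{(\theta+x'P(\varphi)x)^2}\le \frac{m}{\theta}\max_{i}\lambda_{\max}(P_i)$, where $\lambda_{\max}$ denotes the largest eigenvalue. -/

import Mathlib

/-!
In the Loewner order each `P i` lies between `0` and `λ • 1`, where `λ` is the largest
eigenvalue of all the `P i`, so the convex combination `Q = P(φ)` does too. Functional calculus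
on `Q` turns the scalar inequality `s² ≤ λ s` on `[0, λ]` into `Q * Q ≤ λ • Q`, hence
`x'Q²x ≤ λ t` with `t = x'Qx`, and AM–GM gives `4 t / (θ + t)² ≤ 1 / θ`. The ratio is therefore
at most `λ / θ ≤ m λ / θ`.
-/

open Matrix

section CFC

variable {A : Type*} [TopologicalSpace A] [Ring A] [StarRing A] [PartialOrder A]
  [StarOrderedRing A] [Algebra ℝ A] [ContinuousFunctionalCalculus ℝ A IsSelfAdjoint]
  [NonnegSpectrumClass ℝ A]

theorem mul_self_le_smul_of_nonneg_of_le_algebraMap {a : A} {r : ℝ} (ha : 0 ≤ a)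
    (har : a ≤ algebraMap ℝ A r) : a * a ≤ r • a := by
  have hsa : IsSelfAdjoint a := IsSelfAdjoint.of_nonneg ha
  have hspec : ∀ x ∈ spectrum ℝ a, x * x ≤ r * x := fun x hx =>
    mul_le_mul_of_nonneg_right ((le_algebraMap_iff_spectrum_le hsa).1 har x hx)
      (spectrum_nonneg_of_nonneg ha hx)
  calc a * a = cfc (fun x : ℝ => x * x) a := by
        rw [cfc_mul (fun x => x) (fun x => x) a, cfc_id' ℝ a]
    _ ≤ cfc (fun x : ℝ => r * x) a := cfc_mono hspec
    _ = r • a := cfc_smul_id r a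

end CFC

theorem Finset.sum_smul_le_of_le {ι M : Type*} [AddCommMonoid M] [PartialOrder M]
    [IsOrderedAddMonoid M] [Module ℝ M] [PosSMulMono ℝ M] {s : Finset ι} {w : ι → ℝ} {f : ι → M}
    {b : M} (hw₀ : ∀ i ∈ s, 0 ≤ w i) (hw₁ : ∑ i ∈ s, w i = 1) (hf : ∀ i ∈ s, f i ≤ b) :
    ∑ i ∈ s, w i • f i ≤ b :=
  calc ∑ i ∈ s, w i • f i ≤ ∑ i ∈ s, w i • b :=
        Finset.sum_le_sum fun i hi => smul_le_smul_of_nonneg_left (hf i hi) (hw₀ i hi)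
    _ = b := by rw [← Finset.sum_smul, hw₁, one_smul]

theorem four_mul_div_add_sq_le_inv {θ t : ℝ} (hθ : 0 < θ) (ht : 0 ≤ t) :
    4 * t / (θ + t) ^ 2 ≤ θ⁻¹ := by
  rw [div_le_iff₀ (by positivity), inv_mul_eq_div, le_div_iff₀ hθ]
  nlinarith [sq_nonneg (θ - t)]

namespace Matrix

open scoped MatrixOrder

variable {n : Type*} [Fintype n]

theorem dotProduct_mulVec_mono {A B : Matrix n n ℝ} (h : A ≤ B) (x : n → ℝ) :
    x ⬝ᵥ A *ᵥ x ≤ x ⬝ᵥ B *ᵥ x := by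
  have := (Matrix.le_iff.1 h).dotProduct_mulVec_nonneg x
  simpa [sub_mulVec, dotProduct_sub] using this

theorem PosSemidef.le_algebraMap_of_eigenvalues_le [DecidableEq n] {A : Matrix n n ℝ}
    (hA : A.PosSemidef) {r : ℝ} (h : ∀ j, hA.1.eigenvalues j ≤ r) : A ≤ algebraMap ℝ _ r :=
  le_algebraMap_of_spectrum_le (by simpa [hA.1.spectrum_real_eq_range_eigenvalues] using h)
    hA.1.isSelfAdjoint

end Matrix

theorem quadratic_form_ratio_bound_general (n m : ℕ) [NeZero m]
    (P : Fin m → Matrix (Fin n) (Fin n) ℝ) (hP : ∀ i, (P i).PosSemidef)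
    (φ : Fin m → ℝ) (hφ0 : ∀ i, 0 ≤ φ i) (hφ1 : ∑ i, φ i = 1)
    (θ : ℝ) (hθ : 0 < θ) (x : Fin n → ℝ) :
    4 * (x ⬝ᵥ ((∑ i, φ i • P i) * (∑ i, φ i • P i)) *ᵥ x) /
        (θ + x ⬝ᵥ (∑ i, φ i • P i) *ᵥ x) ^ 2
      ≤ (m / θ) * ⨆ i, ⨆ j, (hP i).1.eigenvalues j := by
  open scoped MatrixOrder in
  set Q := ∑ i, φ i • P i
  set lam := ⨆ i, ⨆ j, (hP i).1.eigenvalues j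
  have hlam : 0 ≤ lam := Real.iSup_nonneg fun i => Real.iSup_nonneg (hP i).eigenvalues_nonneg
  have hP_le : ∀ i, P i ≤ algebraMap ℝ _ lam := fun i =>
    (hP i).le_algebraMap_of_eigenvalues_le fun j =>
      (le_ciSup (Set.finite_range _).bddAbove j).trans
        (le_ciSup (f := fun i => ⨆ j, (hP i).1.eigenvalues j) (Set.finite_range _).bddAbove i)
  have hQ : 0 ≤ Q := Finset.sum_nonneg fun i _ => smul_nonneg (hφ0 i) (hP i).nonneg
  have hQ_le : Q ≤ algebraMap ℝ _ lam :=
    Finset.sum_smul_le_of_le (fun i _ => hφ0 i) hφ1 fun i _ => hP_le i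
  have hQQ : x ⬝ᵥ (Q * Q) *ᵥ x ≤ lam * (x ⬝ᵥ Q *ᵥ x) := by
    simpa [smul_mulVec, dotProduct_smul] using
      dotProduct_mulVec_mono (mul_self_le_smul_of_nonneg_of_le_algebraMap hQ hQ_le) x
  have ht : 0 ≤ x ⬝ᵥ Q *ᵥ x := by
    simpa using (nonneg_iff_posSemidef.1 hQ).dotProduct_mulVec_nonneg x
  have hm : (1 : ℝ) ≤ m := by exact_mod_cast NeZero.one_le
  calc 4 * (x ⬝ᵥ (Q * Q) *ᵥ x) / (θ + x ⬝ᵥ Q *ᵥ x) ^ 2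
      ≤ lam * (4 * (x ⬝ᵥ Q *ᵥ x) / (θ + x ⬝ᵥ Q *ᵥ x) ^ 2) := by
        rw [mul_div_assoc', mul_left_comm]; gcongr
    _ ≤ lam * θ⁻¹ := by gcongr; exact four_mul_div_add_sq_le_inv hθ ht
    _ ≤ (m / θ) * lam := by
        rw [mul_comm _ lam, div_eq_mul_inv]
        gcongr
        exact le_mul_of_one_le_left (by positivity) hm

/-- For PSD matrices `P_i`, `φ` in the probability simplex, `P(φ) = ∑ φ_i P_i`
and `θ > 0`: `4 x'P(φ)P(φ)x / (θ + x'P(φ)x)² ≤ (m/θ) maxᵢ λ_max(P_i)`. -/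
theorem quadratic_form_ratio_bound (n m : ℕ) [NeZero n] [NeZero m]
    (P : Fin m → Matrix (Fin n) (Fin n) ℝ) (hP : ∀ i, (P i).PosSemidef)
    (φ : Fin m → ℝ) (hφ0 : ∀ i, 0 ≤ φ i) (hφ1 : ∑ i, φ i = 1)
    (θ : ℝ) (hθ : 0 < θ) (x : Fin n → ℝ) :
    4 * (x ⬝ᵥ ((∑ i, φ i • P i) * (∑ i, φ i • P i)) *ᵥ x) /
        (θ + x ⬝ᵥ (∑ i, φ i • P i) *ᵥ x) ^ 2
      ≤ (m / θ) * ⨆ i, ⨆ j, (hP i).1.eigenvalues j :=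
  quadratic_form_ratio_bound_general n m P hP φ hφ0 hφ1 θ hθ x
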